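/- arXiv:math/0510272 — 5 statements merged into one kernel-verified Lean document; each statement's English description precedes it below -/
import Mathlib

section
/- Let V be a finitely complete and finitely cocomplete monoidal biclosed category whose unit object I is projective (with respect to regular epimorphisms). Let Q be an object such that the functor {-, Q} : V^op → V (the right adjoint of X ⊗ -) is conservative and preserves regular epimorphisms. Then for a morphism f : X → Y, if f ⊗ {X, Q} : X ⊗ {X, Q} → Y ⊗ {X, Q} is a regular monomorphism, then {f, Q} : {Y, Q} → {X, Q} is a split epimorphism. -/
/-!
The evaluation `ev : X ⊗ {X, Q} ⟶ Q` is a global element of `{X ⊗ {X, Q}, Q}`. The functor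
`{-, Q}` turns the regular monomorphism `f ▷ {X, Q}` into a regular epimorphism, through which
this global element lifts by projectivity of the unit. The lift is an extension of `ev` along
`f ▷ {X, Q}`, and the transpose `{X, Q} ⟶ {Y, Q}` of any such extension is a section of
`{f, Q}`.
-/

open CategoryTheory CategoryTheory.Limits CategoryTheory.MonoidalCategory
  CategoryTheory.MonoidalClosed Opposite

namespace CategoryTheory.MonoidalClosed

variable {V : Type*} [Category V] [MonoidalCategory V]

lemma curry'_comp_pre_app {A B : V} [Closed A] [Closed B] (m : A ⟶ B) {Q : V} (h : B ⟶ Q) :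
    curry' h ≫ (pre m).app Q = curry' (m ≫ h) := by
  rw [curry', curry', curry_pre_app, rightUnitor_naturality_assoc]

lemma exists_comp_eq_of_curry'_lifts {A B : V} [Closed A] [Closed B] (m : A ⟶ B) {Q : V}
    (φ : A ⟶ Q) (hlift : ∃ g, g ≫ (pre m).app Q = curry' φ) : ∃ h : B ⟶ Q, m ≫ h = φ := by
  obtain ⟨g, hg⟩ := hlift
  refine ⟨uncurry' g, curry'_injective ?_⟩
  rw [← curry'_comp_pre_app, curry'_uncurry', hg]

lemma isSplitEpi_pre_app_of_extends_ev {X Y : V} [Closed X] [Closed Y] (f : X ⟶ Y) (Q : V)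
    (hext : ∃ h : Y ⊗ (ihom X).obj Q ⟶ Q, f ▷ _ ≫ h = (ihom.ev X).app Q) :
    IsSplitEpi ((pre f).app Q) := by
  obtain ⟨h, hh⟩ := hext
  refine ⟨⟨⟨curry h, ?_⟩⟩⟩
  rw [curry_pre_app, hh, curry_eq_iff, uncurry_id_eq_ev]

end CategoryTheory.MonoidalClosed

theorem stmt0_general {V : Type*} [Category V] [MonoidalCategory V] [MonoidalClosed V]
    -- the unit object is projective with respect to regular epimorphisms
    (hproj : ∀ {P B : V} (e : P ⟶ B), Nonempty (RegularEpi e) → ∀ g : 𝟙_ V ⟶ B, ∃ g', g' ≫ e = g)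
    (Q : V)
    -- `{-, Q} : Vᵒᵖ ⥤ V` preserves regular epimorphisms
    (hregepi : ∀ {X Y : Vᵒᵖ} (g : X ⟶ Y), Nonempty (RegularEpi g) →
      Nonempty (RegularEpi ((MonoidalClosed.internalHom.flip.obj Q).map g)))
    {X Y : V} (f : X ⟶ Y)
    (hf : Nonempty (RegularMono (f ▷ ((ihom X).obj Q)))) :
    IsSplitEpi ((MonoidalClosed.pre f).app Q) := by
  have hpre : Nonempty (RegularEpi ((pre (f ▷ (ihom X).obj Q)).app Q)) :=
    hregepi _ ⟨hf.some.op⟩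
  exact isSplitEpi_pre_app_of_extends_ev f Q
    (exists_comp_eq_of_curry'_lifts _ _ (hproj _ hpre _))

/-- In a finitely complete and finitely cocomplete monoidal biclosed
category `V` whose unit is projective with respect to regular epimorphisms, if `Q` is an
object such that the functor `{-, Q} : Vᵒᵖ ⥤ V` is conservative and preserves regular
epimorphisms, then for any morphism `f : X ⟶ Y` such that
`f ⊗ {X, Q} : X ⊗ {X, Q} ⟶ Y ⊗ {X, Q}` is a regular monomorphism, the morphism
`{f, Q} : {Y, Q} ⟶ {X, Q}` is a split epimorphism. -/
theorem stmt0 {V : Type*} [Category V] [MonoidalCategory V] [MonoidalClosed V]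
    [HasFiniteLimits V] [HasFiniteColimits V]
    -- biclosedness: the functors `- ⊗ X` also all have right adjoints
    (hbiclosed : ∀ X : V, (tensorRight X).IsLeftAdjoint)
    -- the unit object is projective with respect to regular epimorphisms
    (hproj : ∀ {P B : V} (e : P ⟶ B), Nonempty (RegularEpi e) → ∀ g : 𝟙_ V ⟶ B, ∃ g', g' ≫ e = g)
    (Q : V)
    -- `{-, Q} : Vᵒᵖ ⥤ V` is conservative
    (hcons : ∀ {X Y : Vᵒᵖ} (g : X ⟶ Y), IsIso ((MonoidalClosed.internalHom.flip.obj Q).map g) → IsIso g)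
    -- `{-, Q} : Vᵒᵖ ⥤ V` preserves regular epimorphisms
    (hregepi : ∀ {X Y : Vᵒᵖ} (g : X ⟶ Y), Nonempty (RegularEpi g) →
      Nonempty (RegularEpi ((MonoidalClosed.internalHom.flip.obj Q).map g)))
    {X Y : V} (f : X ⟶ Y)
    (hf : Nonempty (RegularMono (f ▷ ((ihom X).obj Q)))) :
    IsSplitEpi ((MonoidalClosed.pre f).app Q) :=
  stmt0_general hproj Q hregepi f hf
end

section
/- Let V be a finitely complete and finitely cocomplete monoidal biclosed category whose unit object I is projective. Let Q be an object such that {-, Q} : V^op → V is conservative and preserves regular epimorphisms. If for a morphism f : X → Y the morphism {f, Q} : {Y, Q} → {X, Q} is a split epimorphism, then f is right pure, i.e., f ⊗ Z : X ⊗ Z → Y ⊗ Z is a regular monomorphism for every object Z. -/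
open CategoryTheory CategoryTheory.Limits CategoryTheory.MonoidalCategory
  CategoryTheory.MonoidalClosed Opposite

/-!
Write `[A, Q]` for the internal hom. Tensoring with `Z` on the right is compatible with the
internal adjunction `[X ⊗ Z, Q] ≅ [Z, [X, Q]]`, so a section of `[f, Q]` yields one of
`[f ▷ Z, Q]`, and it suffices to show that `g` is a regular mono whenever `[g, Q]` is a split epi.
Let `e` be the equalizer of the cokernel pair `u, v : B ⟶ B ⊔_A B` of `g`, and `k` the
comparison map with `k ≫ e = g`. Since `- ⊗ [B, Q]` preserves pushouts, `[-, Q]` turns the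
cokernel pair into a weak pullback; applied to a section `σ` of `[g, Q]` this gives
`[g, Q] ≫ σ ≫ [e, Q] = [e, Q]`. As `[e, Q]` is epi, `σ ≫ [e, Q]` is inverse to `[k, Q]`,
and conservativity makes `k` an isomorphism.
-/

namespace CategoryTheory

lemma isIso_of_fac_of_epi {C : Type*} [Category C] {P R S : C} {g : P ⟶ S} {e : P ⟶ R}
    {k : R ⟶ S} {s : S ⟶ P} [Epi e] (hfac : e ≫ k = g) (hs : s ≫ g = 𝟙 S)
    (he : g ≫ s ≫ e = e) : IsIso k :=
  ⟨s ≫ e, by rw [← cancel_epi e, ← Category.assoc, hfac, he, Category.comp_id],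
    by rw [Category.assoc, hfac, hs]⟩

namespace MonoidalClosed

variable {V : Type*} [Category V] [MonoidalCategory V] [MonoidalClosed V]

def homIhomTensorEquiv (A Z M Q : V) :
    (M ⟶ (ihom (A ⊗ Z)).obj Q) ≃ (Z ⊗ M ⟶ (ihom A).obj Q) where
  toFun h := curry ((α_ A Z M).inv ≫ uncurry h)
  invFun k := curry ((α_ A Z M).hom ≫ uncurry k)
  left_inv h := by simp
  right_inv k := by simp

lemma homIhomTensorEquiv_comp_pre_app {A B Z M Q : V} (a : A ⟶ B)
    (h : M ⟶ (ihom (B ⊗ Z)).obj Q) :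
    homIhomTensorEquiv A Z M Q (h ≫ (pre (a ▷ Z)).app Q) =
      homIhomTensorEquiv B Z M Q h ≫ (pre a).app Q := by
  simp [homIhomTensorEquiv, curry_pre_app, uncurry_pre_app]

lemma isSplitEpi_pre_whiskerRight_app {X Y : V} (f : X ⟶ Y) (Z Q : V)
    [IsSplitEpi ((pre f).app Q)] : IsSplitEpi ((pre (f ▷ Z)).app Q) := by
  refine ⟨⟨⟨(homIhomTensorEquiv Y Z _ Q).symm
    (homIhomTensorEquiv X Z _ Q (𝟙 _) ≫ section_ ((pre f).app Q)), ?_⟩⟩⟩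
  apply (homIhomTensorEquiv X Z _ Q).injective
  rw [homIhomTensorEquiv_comp_pre_app, Equiv.apply_symm_apply, Category.assoc, IsSplitEpi.id,
    Category.comp_id]

lemma exists_comp_pre_app_pushout_inl_inr {A B₁ B₂ M Q : V} (f₁ : A ⟶ B₁) (f₂ : A ⟶ B₂)
    [HasPushout f₁ f₂] [PreservesColimit (span f₁ f₂) (tensorRight M)]
    (a₁ : M ⟶ (ihom B₁).obj Q) (a₂ : M ⟶ (ihom B₂).obj Q)
    (h : a₁ ≫ (pre f₁).app Q = a₂ ≫ (pre f₂).app Q) :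
    ∃ w : M ⟶ (ihom (pushout f₁ f₂)).obj Q,
      w ≫ (pre (pushout.inl f₁ f₂)).app Q = a₁ ∧ w ≫ (pre (pushout.inr f₁ f₂)).app Q = a₂ := by
  have hPO := isColimitPushoutCoconeMapOfIsColimit (tensorRight M) pushout.condition
    (pushoutIsPushout f₁ f₂)
  have hcompat : f₁ ▷ M ≫ uncurry a₁ = f₂ ▷ M ≫ uncurry a₂ := by
    rw [← uncurry_pre_app, ← uncurry_pre_app, h]
  let d : pushout f₁ f₂ ⊗ M ⟶ Q := PushoutCocone.IsColimit.desc hPO _ _ hcompat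
  refine ⟨curry d, uncurry_injective ?_, uncurry_injective ?_⟩
  · rw [uncurry_pre_app, uncurry_curry]
    exact PushoutCocone.IsColimit.inl_desc hPO _ _ hcompat
  · rw [uncurry_pre_app, uncurry_curry]
    exact PushoutCocone.IsColimit.inr_desc hPO _ _ hcompat

variable [HasFiniteLimits V] [HasFiniteColimits V]

theorem regularMono_of_isSplitEpi_pre_app (hbiclosed : ∀ X : V, (tensorRight X).IsLeftAdjoint)
    (Q : V)
    (hcons : ∀ {X Y : Vᵒᵖ} (g : X ⟶ Y), IsIso ((internalHom.flip.obj Q).map g) → IsIso g)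
    (hregepi : ∀ {X Y : Vᵒᵖ} (g : X ⟶ Y), Nonempty (RegularEpi g) →
      Nonempty (RegularEpi ((internalHom.flip.obj Q).map g)))
    {A B : V} (g : A ⟶ B) [IsSplitEpi ((pre g).app Q)] : Nonempty (RegularMono g) := by
  let u := pushout.inl g g
  let v := pushout.inr g g
  let e := equalizer.ι u v
  let k : A ⟶ equalizer u v := equalizer.lift g pushout.condition
  have hfac : k ≫ e = g := equalizer.lift_ι _ _
  let s := section_ ((pre g).app Q)
  have := hbiclosed ((ihom B).obj Q)
  obtain ⟨w, hwu, hwv⟩ := exists_comp_pre_app_pushout_inl_inr g g ((pre g).app Q ≫ s) (𝟙 _)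
    (by rw [Category.assoc, IsSplitEpi.id, Category.comp_id, Category.id_comp])
  have : Epi ((pre e).app Q) := (hregepi e.op ⟨(RegularMono.equalizer u v).op⟩).some.epi
  have : IsIso ((pre k).app Q) := by
    refine isIso_of_fac_of_epi (e := (pre e).app Q) (s := s) ?_ (IsSplitEpi.id _) ?_
    · rw [← NatTrans.comp_app, ← pre_map, hfac]
    · rw [← Category.assoc, ← hwu, Category.assoc, ← NatTrans.comp_app, ← pre_map,
        equalizer.condition, pre_map, NatTrans.comp_app, ← Category.assoc, hwv, Category.id_comp]
  have : IsIso k := by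
    have := hcons k.op this
    exact isIso_of_op k
  exact ⟨RegularMono.ofArrowIso (Arrow.isoMk (asIso k).symm (Iso.refl B) (by simp [← hfac, e]))
    (RegularMono.equalizer u v)⟩

end MonoidalClosed

end CategoryTheory

theorem stmt1_general {V : Type*} [Category V] [MonoidalCategory V] [MonoidalClosed V]
    [HasFiniteLimits V] [HasFiniteColimits V]
    (hbiclosed : ∀ X : V, (tensorRight X).IsLeftAdjoint)
    (Q : V)
    (hcons : ∀ {X Y : Vᵒᵖ} (g : X ⟶ Y),
      IsIso ((MonoidalClosed.internalHom.flip.obj Q).map g) → IsIso g)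
    (hregepi : ∀ {X Y : Vᵒᵖ} (g : X ⟶ Y), Nonempty (RegularEpi g) →
      Nonempty (RegularEpi ((MonoidalClosed.internalHom.flip.obj Q).map g)))
    {X Y : V} (f : X ⟶ Y)
    (hf : IsSplitEpi ((MonoidalClosed.pre f).app Q)) :
    ∀ Z : V, Nonempty (RegularMono (f ▷ Z)) := fun Z =>
  have := isSplitEpi_pre_whiskerRight_app f Z Q
  regularMono_of_isSplitEpi_pre_app hbiclosed Q hcons hregepi (f ▷ Z)

/-- In a finitely complete and finitely cocomplete monoidal biclosed
category `V` whose unit is projective with respect to regular epimorphisms, if `Q` is an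
object such that `{-, Q} : Vᵒᵖ ⥤ V` is conservative and preserves regular epimorphisms,
and `f : X ⟶ Y` is a morphism such that `{f, Q} : {Y, Q} ⟶ {X, Q}` is a split
epimorphism, then `f` is right pure: `f ⊗ Z` is a regular monomorphism for all `Z`. -/
theorem stmt1 {V : Type*} [Category V] [MonoidalCategory V] [MonoidalClosed V]
    [HasFiniteLimits V] [HasFiniteColimits V]
    (hbiclosed : ∀ X : V, (tensorRight X).IsLeftAdjoint)
    (hproj : ∀ {P B : V} (e : P ⟶ B), Nonempty (RegularEpi e) → ∀ g : 𝟙_ V ⟶ B, ∃ g', g' ≫ e = g)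
    (Q : V)
    (hcons : ∀ {X Y : Vᵒᵖ} (g : X ⟶ Y),
      IsIso ((MonoidalClosed.internalHom.flip.obj Q).map g) → IsIso g)
    (hregepi : ∀ {X Y : Vᵒᵖ} (g : X ⟶ Y), Nonempty (RegularEpi g) →
      Nonempty (RegularEpi ((MonoidalClosed.internalHom.flip.obj Q).map g)))
    {X Y : V} (f : X ⟶ Y)
    (hf : IsSplitEpi ((MonoidalClosed.pre f).app Q)) :
    ∀ Z : V, Nonempty (RegularMono (f ▷ Z)) :=
  stmt1_general hbiclosed Q hcons hregepi f hf
end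

section
/- In a finitely complete and finitely cocomplete monoidal biclosed category V with projective unit, if Q is an object for which {-, Q} : V^op → V is conservative and preserves regular epimorphisms, then a morphism f : X → Y is right pure if and only if {f, Q} : {Y, Q} → {X, Q} is a split epimorphism. -/
open CategoryTheory CategoryTheory.Limits CategoryTheory.MonoidalCategory
  CategoryTheory.MonoidalClosed Opposite

/-!
Transposing along the internal hom, a section of `{f, Q}` is the same as an extension of the
evaluation map `X ⊗ {X, Q} ⟶ Q` along `f ▷ {X, Q}`. If `f` is right pure, then `{f ▷ Z, Q}` is a
regular epimorphism, and projectivity of the unit lifts the global element of `{X ⊗ Z, Q}`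
corresponding to the evaluation (for `Z = {X, Q}`) to the required extension. Conversely, a section
of `{f, Q}` yields one of `{f ▷ Z, Q}` for every `Z`. Since `{-, Q}` is a right adjoint, it carries
the cokernel pair of `h = f ▷ Z` to the kernel pair of the split epimorphism `{h, Q}`; comparing
`h` with the equalizer of its cokernel pair, conservativity shows that `h` is that equalizer.
-/

section ReflectRegularEpi

variable {C D : Type*} [Category C] [Category D]

theorem isRegularEpi_of_isSplitEpi_map (G : C ⥤ D) [G.ReflectsIsomorphisms]
    (hG : ∀ {A B : C} (p : A ⟶ B), IsRegularEpi p → Epi (G.map p))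
    {A B : C} (g : A ⟶ B) [HasPullback g g]
    [HasCoequalizer (pullback.fst g g) (pullback.snd g g)] [PreservesLimit (cospan g g) G]
    [IsSplitEpi (G.map g)] : IsRegularEpi g := by
  set q := coequalizer.π (pullback.fst g g) (pullback.snd g g)
  set e := coequalizer.desc g pullback.condition
  have hqe : q ≫ e = g := coequalizer.π_desc _ _
  have := hG q inferInstance
  have kernelPair := (IsPullback.of_hasPullback g g).map G
  -- `G.map g` is split, hence effective, and its kernel pair is the image of that of `g`.
  let k := EffectiveEpi.desc (G.map g) (G.map q) fun a b hab => by
    obtain ⟨l, rfl, rfl⟩ := kernelPair.exists_lift a b hab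
    simp only [Category.assoc, ← G.map_comp]
    rw [coequalizer.condition]
  have hk : G.map g ≫ k = G.map q := EffectiveEpi.fac _ _ _
  have : IsSplitMono (G.map e) := IsSplitMono.mk' ⟨k, by
    rw [← cancel_epi (G.map q), ← G.map_comp_assoc, hqe, hk, Category.comp_id]⟩
  have : Epi (G.map e) := by
    have : Epi (G.map q ≫ G.map e) := by rw [← G.map_comp, hqe]; infer_instance
    exact epi_of_epi (G.map q) _
  have : IsIso (G.map e) := isIso_of_epi_of_isSplitMono _
  have : IsIso e := isIso_of_reflects_iso e G
  rw [← hqe]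
  exact MorphismProperty.RespectsIso.postcomp (MorphismProperty.regularEpi C) e q
    (inferInstanceAs (IsRegularEpi q))

end ReflectRegularEpi

namespace CategoryTheory.MonoidalClosed

variable {V : Type*} [Category V] [MonoidalCategory V] [MonoidalClosed V]

lemma uncurry'_comp_pre_app {A B Q : V} (g : 𝟙_ V ⟶ (ihom B).obj Q) (k : A ⟶ B) :
    uncurry' (g ≫ (pre k).app Q) = k ≫ uncurry' g := by
  rw [uncurry', uncurry_pre_app, ← rightUnitor_inv_naturality_assoc, uncurry']

lemma isSplitEpi_pre_app_iff {A B : V} (k : A ⟶ B) (Q : V) :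
    IsSplitEpi ((pre k).app Q) ↔
      ∃ φ : B ⊗ (ihom A).obj Q ⟶ Q, k ▷ _ ≫ φ = (ihom.ev A).app Q := by
  constructor
  · rintro ⟨⟨s, hs⟩⟩
    exact ⟨uncurry s, by rw [← uncurry_pre_app, hs, uncurry_id_eq_ev]⟩
  · rintro ⟨φ, hφ⟩
    exact ⟨⟨curry φ, by rw [curry_pre_app, hφ, ← uncurry_id_eq_ev, curry_uncurry]⟩⟩

lemma isSplitEpi_pre_app_whiskerRight {X Y : V} {f : X ⟶ Y} {Q : V}
    (hf : IsSplitEpi ((pre f).app Q)) (Z : V) : IsSplitEpi ((pre (f ▷ Z)).app Q) := by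
  obtain ⟨φ, hφ⟩ := (isSplitEpi_pre_app_iff f Q).1 hf
  set W := (ihom (X ⊗ Z)).obj Q
  let c : Z ⊗ W ⟶ (ihom X).obj Q := curry ((α_ X Z W).inv ≫ (ihom.ev (X ⊗ Z)).app Q)
  refine (isSplitEpi_pre_app_iff (f ▷ Z) Q).2 ⟨(α_ Y Z W).hom ≫ Y ◁ c ≫ φ, ?_⟩
  rw [associator_naturality_left_assoc, ← whisker_exchange_assoc, hφ,
    whiskerLeft_curry_ihom_ev_app, Iso.hom_inv_id_assoc]

/-- With `tensorRight A ⊣ R A`, morphisms `A ⟶ {X, Q}` correspond to `X ⊗ A ⟶ Q` and hence to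
`X ⟶ (R A).obj Q`, so `A ↦ op ((R A).obj Q)` is a left adjoint of `{-, Q}`. -/
lemma isRightAdjoint_internalHom_flip_obj
    (hbiclosed : ∀ A : V, (tensorRight A).IsLeftAdjoint) (Q : V) :
    (internalHom.flip.obj Q).IsRightAdjoint := by
  let adj (A : V) := @Adjunction.ofIsLeftAdjoint _ _ _ _ (tensorRight A) (hbiclosed A)
  let e (A : V) (X : Vᵒᵖ) :
      (op ((tensorRight A).rightAdjoint.obj Q) ⟶ X) ≃ (A ⟶ (internalHom.flip.obj Q).obj X) :=
    (opEquiv _ _).trans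
      (((adj A).homEquiv X.unop Q).symm.trans ((ihom.adjunction X.unop).homEquiv A Q))
  refine (Adjunction.adjunctionOfEquivLeft e fun A X X' g h => ?_).isRightAdjoint
  change curry (((adj A).homEquiv X'.unop Q).symm (g.unop ≫ h.unop))
    = curry (((adj A).homEquiv X.unop Q).symm h.unop) ≫ (pre g.unop).app Q
  rw [Adjunction.homEquiv_naturality_left_symm, curry_pre_app]
  rfl

end CategoryTheory.MonoidalClosed

/-- In a finitely complete and finitely cocomplete monoidal biclosed
category `V` with projective unit, if `Q` is an object for which `{-, Q} : Vᵒᵖ ⥤ V` is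
conservative and preserves regular epimorphisms, then a morphism `f : X ⟶ Y` is right
pure (i.e. `f ⊗ Z` is a regular monomorphism for every `Z`) if and only if
`{f, Q} : {Y, Q} ⟶ {X, Q}` is a split epimorphism. -/
theorem stmt2 {V : Type*} [Category V] [MonoidalCategory V] [MonoidalClosed V]
    [HasFiniteLimits V] [HasFiniteColimits V]
    (hbiclosed : ∀ X : V, (tensorRight X).IsLeftAdjoint)
    (hproj : ∀ {P B : V} (e : P ⟶ B), Nonempty (RegularEpi e) → ∀ g : 𝟙_ V ⟶ B, ∃ g', g' ≫ e = g)
    (Q : V)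
    (hcons : ∀ {X Y : Vᵒᵖ} (g : X ⟶ Y),
      IsIso ((MonoidalClosed.internalHom.flip.obj Q).map g) → IsIso g)
    (hregepi : ∀ {X Y : Vᵒᵖ} (g : X ⟶ Y), Nonempty (RegularEpi g) →
      Nonempty (RegularEpi ((MonoidalClosed.internalHom.flip.obj Q).map g)))
    {X Y : V} (f : X ⟶ Y) :
    (∀ Z : V, Nonempty (RegularMono (f ▷ Z))) ↔ IsSplitEpi ((MonoidalClosed.pre f).app Q) := by
  constructor
  · intro hpure
    set Z := (ihom X).obj Q
    obtain ⟨hmono⟩ := hpure Z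
    obtain ⟨g, hg⟩ : ∃ g : 𝟙_ V ⟶ (ihom (Y ⊗ Z)).obj Q,
        g ≫ (pre (f ▷ Z)).app Q = curry' ((ihom.ev X).app Q) :=
      hproj _ (hregepi _ ⟨hmono.op⟩) _
    refine (isSplitEpi_pre_app_iff f Q).2 ⟨uncurry' g, ?_⟩
    rw [← uncurry'_comp_pre_app, hg, uncurry'_curry']
  · intro hsplit Z
    have := isRightAdjoint_internalHom_flip_obj hbiclosed Q
    have : (internalHom.flip.obj Q).ReflectsIsomorphisms := ⟨hcons⟩
    have : IsSplitEpi ((internalHom.flip.obj Q).map (f ▷ Z).op) :=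
      isSplitEpi_pre_app_whiskerRight hsplit Z
    have hepi := isRegularEpi_of_isSplitEpi_map (internalHom.flip.obj Q)
      (fun p ⟨⟨hp⟩⟩ => (hregepi p ⟨hp⟩).some.epi) (f ▷ Z).op
    exact ((isRegularEpi_op_iff_isRegularMono _).1 hepi).regularMono
end

section
/- Let K be a commutative ring, A a K-algebra that is separable over K (i.e., A is projective as an (A,A)-bimodule, equivalently as a module over A ⊗_K A^op), and i : A → B a homomorphism of K-algebras. If i is a pure morphism of left A-modules (i.e., L ⊗_A i is injective for every right A-module L), then the induced map i⁺ : B⁺ → A⁺ on character bimodules M⁺ = Hom_ℤ(M, ℚ/ℤ) is a split epimorphism of (A,A)-bimodules. -/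
open scoped TensorProduct
open MulOpposite

/-- The subgroup of `L ⊗[ℤ] M` by which one quotients to obtain the tensor product
`L ⊗[A] M` of a right `A`-module `L` and a left `A`-module `M` over a
(not necessarily commutative) ring `A`. -/
noncomputable def NCrel (A : Type) [Ring A] (L M : Type) [AddCommGroup L]
    [AddCommGroup M] [Module Aᵐᵒᵖ L] [Module A M] : AddSubgroup (L ⊗[ℤ] M) :=
  AddSubgroup.closure
    {x | ∃ (l : L) (a : A) (m : M), x = (op a • l) ⊗ₜ[ℤ] m - l ⊗ₜ[ℤ] (a • m)}

/-- The tensor product `L ⊗[A] M` over a (not necessarily commutative) ring `A` of a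
right `A`-module `L` and a left `A`-module `M`, as an abelian group. -/
abbrev NCT (A : Type) [Ring A] (L M : Type) [AddCommGroup L] [AddCommGroup M]
    [Module Aᵐᵒᵖ L] [Module A M] : Type :=
  (L ⊗[ℤ] M) ⧸ NCrel A L M

/-- The elementary tensor `l ⊗ m` in `L ⊗[A] M`. -/
noncomputable def NCT.tmul (A : Type) [Ring A] {L M : Type} [AddCommGroup L]
    [AddCommGroup M] [Module Aᵐᵒᵖ L] [Module A M] (l : L) (m : M) : NCT A L M :=
  QuotientAddGroup.mk (l ⊗ₜ[ℤ] m)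

/-- The map `L ⊗[A] f : L ⊗[A] M → L ⊗[A] N` induced by a morphism `f : M → N` of left
`A`-modules. -/
noncomputable def NCT.mapRight (A : Type) [Ring A] (L : Type) [AddCommGroup L]
    [Module Aᵐᵒᵖ L] {M N : Type} [AddCommGroup M] [AddCommGroup N] [Module A M]
    [Module A N] (f : M →+ N) (hf : ∀ (a : A) (m : M), f (a • m) = a • f m) :
    NCT A L M →+ NCT A L N :=
  QuotientAddGroup.map _ _
    (TensorProduct.map LinearMap.id f.toIntLinearMap).toAddMonoidHom
    (by
      refine (AddSubgroup.closure_le _).mpr ?_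
      rintro x ⟨l, a, m, rfl⟩
      simp only [SetLike.mem_coe, AddSubgroup.mem_comap, map_sub,
        LinearMap.toAddMonoidHom_coe, TensorProduct.map_tmul, LinearMap.id_coe, id_eq,
        AddMonoidHom.coe_toIntLinearMap]
      exact AddSubgroup.subset_closure ⟨l, a, f m, by rw [hf]⟩)

/-- The map `f ⊗[A] M : L ⊗[A] M → L' ⊗[A] M` induced by a morphism `f : L → L'` of
right `A`-modules. -/
noncomputable def NCT.mapLeft (A : Type) [Ring A] {L L' : Type} [AddCommGroup L]
    [AddCommGroup L'] [Module Aᵐᵒᵖ L] [Module Aᵐᵒᵖ L'] (M : Type) [AddCommGroup M]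
    [Module A M] (f : L →+ L') (hf : ∀ (a : Aᵐᵒᵖ) (l : L), f (a • l) = a • f l) :
    NCT A L M →+ NCT A L' M :=
  QuotientAddGroup.map _ _
    (TensorProduct.map f.toIntLinearMap LinearMap.id).toAddMonoidHom
    (by
      refine (AddSubgroup.closure_le _).mpr ?_
      rintro x ⟨l, a, m, rfl⟩
      simp only [SetLike.mem_coe, AddSubgroup.mem_comap, map_sub,
        LinearMap.toAddMonoidHom_coe, TensorProduct.map_tmul, LinearMap.id_coe, id_eq,
        AddMonoidHom.coe_toIntLinearMap]
      exact AddSubgroup.subset_closure ⟨f l, a, m, by rw [hf]⟩)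

/-- `i : A → B` is a pure morphism of left `A`-modules: for every right `A`-module `L`,
the map `L ⊗[A] i : L ⊗[A] A → L ⊗[A] B` is injective.  Here `B` is a left `A`-module
via `i`. -/
noncomputable def RingHom.LeftPure {A B : Type} [Ring A] [Ring B] (i : A →+* B) :
    Prop :=
  ∀ (L : Type) (_ : AddCommGroup L) (_ : Module Aᵐᵒᵖ L),
    letI : Module A B := Module.compHom B i
    Function.Injective
      (NCT.mapRight A L (M := A) (N := B) i.toAddMonoidHom
        (fun a m => show i (a * m) = i a * i m from map_mul i a m))

/-- `i : A → B` is a pure morphism of right `A`-modules: for every left `A`-module `L`,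
the map `i ⊗[A] L : A ⊗[A] L → B ⊗[A] L` is injective.  Here `B` is a right `A`-module
via `i`. -/
noncomputable def RingHom.RightPure {A B : Type} [Ring A] [Ring B] (i : A →+* B) :
    Prop :=
  ∀ (L : Type) (_ : AddCommGroup L) (_ : Module A L),
    letI : Module Aᵐᵒᵖ B := Module.compHom B (RingHom.op i)
    Function.Injective
      (NCT.mapLeft A (L := A) (L' := B) L i.toAddMonoidHom
        (fun a l => show i (l * a.unop) = i l * i a.unop from map_mul i l a.unop))


/-- The rational circle group `ℚ/ℤ`. -/
abbrev QZ : Type := AddCircle (1 : ℚ)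

/-- The `(A,A)`-bimodule action `(a · f · a') (x) = f (a' * x * a)` on the character
bimodule `A⁺ = Hom_ℤ(A, ℚ/ℤ)` of a ring `A`. -/
def charAct {A : Type} [Ring A] (a a' : A) (f : A →+ QZ) : A →+ QZ :=
  AddMonoidHom.mk' (fun x => f (a' * x * a))
    (by intro x y; simp [mul_add, add_mul])


/-- A `K`-algebra `A` is separable if the multiplication map `A ⊗[K] A → A` admits an
`(A,A)`-bimodule section, equivalently if there is a separability idempotent
`e ∈ A ⊗[K] A` with `(mul) e = 1` and `(a ⊗ 1) * e = e * (1 ⊗ a)` for all `a`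
(equivalently, `A` is projective as an `(A,A)`-bimodule). -/
def IsSeparableAlgebra (K A : Type) [CommRing K] [Ring A] [Algebra K A] : Prop :=
  ∃ e : A ⊗[K] A, LinearMap.mul' K A e = 1 ∧
    ∀ a : A, (a ⊗ₜ[K] (1 : A)) * e = e * ((1 : A) ⊗ₜ[K] a)


/-!
Purity of `i` says that `A⁺ ⊗_A A → A⁺ ⊗_A B` is injective, so, `ℚ/ℤ` being an injective
abelian group, the evaluation pairing `A⁺ ⊗_A A → ℚ/ℤ` extends to `A⁺ ⊗_A B`. Currying it gives
a section `σ` of `i⁺` that is right `A`-linear. For a separability idempotent `e = ∑ uⱼ ⊗ vⱼ`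
the average `s f = ∑ uⱼ · σ (vⱼ · f)` is still a section since `∑ uⱼ vⱼ = 1`, and it is also
left `A`-linear since `(a ⊗ 1) e = e (1 ⊗ a)`.
-/

namespace NCT

variable {A : Type} [Ring A] {L M N P : Type} [AddCommGroup L] [AddCommGroup M] [AddCommGroup N]
  [AddCommGroup P] [Module Aᵐᵒᵖ L] [Module A M] [Module A N]

lemma tmul_add (l : L) (m m' : M) : tmul A l (m + m') = tmul A l m + tmul A l m' := by
  simp only [tmul, TensorProduct.tmul_add, QuotientAddGroup.mk_add]

lemma add_tmul (l l' : L) (m : M) : tmul A (l + l') m = tmul A l m + tmul A l' m := by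
  simp only [tmul, TensorProduct.add_tmul, QuotientAddGroup.mk_add]

lemma smul_tmul (a : A) (l : L) (m : M) : tmul A (op a • l) m = tmul A l (a • m) :=
  (QuotientAddGroup.eq_iff_sub_mem ..).mpr (AddSubgroup.subset_closure ⟨l, a, m, rfl⟩)

variable (A L M) in
noncomputable def mk : L →+ M →+ NCT A L M :=
  AddMonoidHom.mk' (fun l => AddMonoidHom.mk' (tmul A l) (tmul_add (A := A) l))
    fun l l' => AddMonoidHom.ext fun m => add_tmul (A := A) l l' m

@[simp] lemma mapRight_tmul (f : M →+ N) (hf : ∀ (a : A) (m : M), f (a • m) = a • f m)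
    (l : L) (m : M) : mapRight A L f hf (tmul A l m) = tmul A l (f m) :=
  rfl

noncomputable def lift (p : L →+ M →+ P)
    (hp : ∀ (a : A) (l : L) (m : M), p (op a • l) m = p l (a • m)) : NCT A L M →+ P :=
  QuotientAddGroup.lift _ (TensorProduct.liftAddHom p fun z l m => by simp) <| by
    refine (AddSubgroup.closure_le _).mpr ?_
    rintro x ⟨l, a, m, rfl⟩
    simp [hp]

@[simp] lemma lift_tmul (p : L →+ M →+ P)
    (hp : ∀ (a : A) (l : L) (m : M), p (op a • l) m = p l (a • m)) (l : L) (m : M) :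
    lift p hp (tmul A l m) = p l m :=
  (QuotientAddGroup.lift_mk ..).trans (TensorProduct.liftAddHom_tmul ..)

end NCT

section CharAct

variable {R : Type} [Ring R]

@[simp] lemma charAct_apply (a a' : R) (f : R →+ QZ) (x : R) :
    charAct a a' f x = f (a' * x * a) := rfl

lemma charAct_charAct (a a' c c' : R) (f : R →+ QZ) :
    charAct a a' (charAct c c' f) = charAct (a * c) (c' * a') f := by
  ext x; simp [mul_assoc]

noncomputable def charActHom (a a' : R) : (R →+ QZ) →+ (R →+ QZ) :=
  AddMonoidHom.mk' (charAct a a') fun _ _ => rfl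

@[simp] lemma charActHom_apply (a a' : R) (f : R →+ QZ) : charActHom a a' f = charAct a a' f :=
  rfl

lemma charActHom_add_left (a₁ a₂ a' : R) :
    charActHom (a₁ + a₂) a' = charActHom a₁ a' + charActHom a₂ a' := by
  ext f x; simp [mul_add]

lemma charAct_add (a a' : R) (f g : R →+ QZ) :
    charAct a a' (f + g) = charAct a a' f + charAct a a' g :=
  map_add (charActHom a a') f g

lemma charAct_zero (a a' : R) : charAct a a' (0 : R →+ QZ) = 0 :=
  map_zero (charActHom a a')

end CharAct

theorem RingHom.LeftPure.exists_rightLinear_charSection {A B : Type} [Ring A] [Ring B]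
    {i : A →+* B} (hi : i.LeftPure) :
    ∃ σ : (A →+ QZ) →+ (B →+ QZ), (∀ f, (σ f).comp i.toAddMonoidHom = f) ∧
      ∀ a f, σ (charAct 1 a f) = charAct 1 (i a) (σ f) := by
  -- `Aᵈᵐᵃ` is a type synonym for `Aᵐᵒᵖ`
  let _ : Module Aᵐᵒᵖ (A →+ QZ) := AddMonoidHom.instDomMulActModule (S := A)
  let _ : Module A B := Module.compHom B i
  have heval (a : A) (f : A →+ QZ) (x : A) : (MulOpposite.op a • f) x = f (a • x) := rfl
  obtain ⟨Ψ, hΨ⟩ := (Module.Baer.of_divisible QZ).extension_property_addMonoidHom _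
    (hi (A →+ QZ) _ _) (NCT.lift (AddMonoidHom.id _) heval)
  refine ⟨(NCT.mk A (A →+ QZ) B).compr₂ Ψ, fun f => ?_, fun a f => ?_⟩
  · ext m
    have := DFunLike.congr_fun hΨ (NCT.tmul A f m)
    rwa [AddMonoidHom.comp_apply, NCT.mapRight_tmul, NCT.lift_tmul] at this
  · have hf : charAct 1 a f = MulOpposite.op a • f := by
      ext x; exact congrArg f (mul_one _)
    ext b
    show Ψ (NCT.tmul A (charAct 1 a f) b) = Ψ (NCT.tmul A f (i a * b * 1))
    rw [hf, NCT.smul_tmul, mul_one]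
    rfl

section Averaging

variable {K A B : Type} [CommRing K] [Ring A] [Algebra K A] [Ring B] [Algebra K B]
  (i : A →ₐ[K] B) (σ : (A →+ QZ) →+ (B →+ QZ))

noncomputable def charAverageTerm : A →+ A →+ (A →+ QZ) →+ (B →+ QZ) :=
  AddMonoidHom.mk'
    (fun u => AddMonoidHom.mk' (fun v => (charActHom (i u) 1).comp (σ.comp (charActHom v 1)))
      fun v v' => by rw [charActHom_add_left, AddMonoidHom.comp_add, AddMonoidHom.comp_add])
    fun u u' => by ext v : 1; simp [charActHom_add_left, AddMonoidHom.add_comp]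

@[simp] lemma charAverageTerm_apply (u v : A) (f : A →+ QZ) :
    charAverageTerm i σ u v f = charAct (i u) 1 (σ (charAct v 1 f)) := rfl

variable {i σ} (hσ : ∀ a f, σ (charAct 1 a f) = charAct 1 (i a) (σ f))
include hσ

lemma charAverageTerm_smul_left (k : K) (u v : A) :
    charAverageTerm i σ (k • u) v = charAverageTerm i σ u (k • v) := by
  ext f b
  have hv : charAct (k • v) 1 f = charAct 1 (algebraMap K A k) (charAct v 1 f) := by
    ext x
    simp only [charAct_apply, one_mul, mul_one]
    rw [mul_smul_comm, Algebra.smul_def, mul_assoc]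
  simp only [charAverageTerm_apply, hv, hσ, charAct_apply, one_mul, mul_one]
  rw [map_smul, mul_smul_comm, Algebra.smul_def, AlgHom.commutes]

noncomputable def charAverage : A ⊗[K] A →+ (A →+ QZ) →+ (B →+ QZ) :=
  TensorProduct.liftAddHom (charAverageTerm i σ) (charAverageTerm_smul_left hσ)

lemma charAverage_tmul (u v : A) : charAverage hσ (u ⊗ₜ[K] v) = charAverageTerm i σ u v :=
  TensorProduct.liftAddHom_tmul ..

lemma charAverage_apply_map (hσi : ∀ f, (σ f).comp i.toRingHom.toAddMonoidHom = f)
    (t : A ⊗[K] A) (f : A →+ QZ) (x : A) :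
    charAverage hσ t f (i x) = f (x * LinearMap.mul' K A t) := by
  induction t using TensorProduct.induction_on with
  | zero => simp
  | tmul u v =>
    rw [charAverage_tmul, charAverageTerm_apply, charAct_apply, one_mul, ← map_mul,
      LinearMap.mul'_apply, ← mul_assoc]
    exact (DFunLike.congr_fun (hσi _) (x * u)).trans (by rw [charAct_apply, one_mul])
  | add t t' ht ht' => simp [ht, ht', mul_add]

lemma charAverage_charAct (t : A ⊗[K] A) (f : A →+ QZ) (a a' : A) :
    charAverage hσ t (charAct a a' f) =
      charAct 1 (i a') (charAverage hσ (t * (1 ⊗ₜ[K] a)) f) := by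
  induction t using TensorProduct.induction_on with
  | zero => simp [charAct_zero]
  | tmul u v =>
    have h : charAct v 1 (charAct a a' f) = charAct 1 a' (charAct (v * a) 1 f) := by
      rw [charAct_charAct, charAct_charAct]; simp
    rw [Algebra.TensorProduct.tmul_mul_tmul, mul_one, charAverage_tmul, charAverage_tmul,
      charAverageTerm_apply, charAverageTerm_apply, h, hσ, charAct_charAct, charAct_charAct]
    simp
  | add t t' ht ht' => simp [ht, ht', add_mul, charAct_add]

lemma charAverage_mul_left (t : A ⊗[K] A) (f : A →+ QZ) (a : A) :
    charAverage hσ ((a ⊗ₜ[K] 1) * t) f = charAct (i a) 1 (charAverage hσ t f) := by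
  induction t using TensorProduct.induction_on with
  | zero => simp [charAct_zero]
  | tmul u v =>
    rw [Algebra.TensorProduct.tmul_mul_tmul, one_mul, charAverage_tmul, charAverage_tmul,
      charAverageTerm_apply, charAverageTerm_apply, map_mul, charAct_charAct, one_mul]
  | add t t' ht ht' => simp [ht, ht', mul_add, charAct_add]

theorem IsSeparableAlgebra.exists_bimodule_charSection (hA : IsSeparableAlgebra K A)
    (hσi : ∀ f, (σ f).comp i.toRingHom.toAddMonoidHom = f) :
    ∃ s : (A →+ QZ) →+ (B →+ QZ),
      (∀ f : A →+ QZ, (s f).comp i.toRingHom.toAddMonoidHom = f) ∧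
      (∀ (f : A →+ QZ) (a a' : A) (b : B), s (charAct a a' f) b = s f (i a' * b * i a)) := by
  obtain ⟨e, he_mul, he_comm⟩ := hA
  refine ⟨charAverage hσ e, fun f => ?_, fun f a a' b => ?_⟩
  · ext x
    simp [charAverage_apply_map hσ hσi, he_mul]
  · rw [charAverage_charAct, ← he_comm, charAverage_mul_left, charAct_charAct]
    simp

end Averaging

/-- Let `K` be a commutative ring, `A` a separable `K`-algebra, and
`i : A → B` a homomorphism of `K`-algebras.  If `i` is a pure morphism of left
`A`-modules, then the induced map `i⁺ : B⁺ → A⁺` on character bimodules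
(`M⁺ = Hom_ℤ(M, ℚ/ℤ)`) is a split epimorphism of `(A,A)`-bimodules: there is an
additive section `s : A⁺ → B⁺` of precomposition with `i` which is equivariant for the
`(A,A)`-bimodule actions. -/
theorem stmt8 {K A B : Type} [CommRing K] [Ring A] [Algebra K A] [Ring B] [Algebra K B]
    (hA : IsSeparableAlgebra K A) (i : A →ₐ[K] B)
    (hpure : i.toRingHom.LeftPure) :
    ∃ s : (A →+ QZ) →+ (B →+ QZ),
      (∀ f : A →+ QZ, (s f).comp i.toRingHom.toAddMonoidHom = f) ∧
      (∀ (f : A →+ QZ) (a a' : A) (b : B),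
        s (charAct a a' f) b = s f (i a' * b * i a)) := by
  obtain ⟨σ, hσi, hσ⟩ := hpure.exists_rightLinear_charSection
  exact hA.exists_bimodule_charSection hσ hσi
end

section
/- Let K be a commutative ring, A a K-algebra, M a right A-module finitely generated and projective, E = End_A(M), and i_M : K → E the canonical map k ↦ (m ↦ km). Then i_M is a pure morphism of K-modules (i.e., X ⊗_K i_M is injective for all K-modules X) if and only if M is totally faithful over K (i.e., X → Hom_A(M, X ⊗_K M) is injective for all K-modules X). -/
/-!
Via `X ⊗ K ≅ X`, purity says that `x ⊗ id_M = 0` in `X ⊗ E` forces `x = 0`, while total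
faithfulness says that `x ⊗ m = 0` for all `m` forces `x = 0`; so it suffices that
`x ⊗ id_M = 0` iff `x ⊗ m = 0` for all `m`. A finite dual basis `m = ∑ cᵢ(m) • vᵢ` of `M`
writes the identity of `Hom_A(M, N)` as `∑ᵢ hᵢ ∘ ev_{vᵢ}` with `K`-linear `hᵢ`, so a tensor in
`X ⊗ Hom_A(M, N)` killed by every `X ⊗ ev_m` is zero.
-/

open scoped TensorProduct

theorem Module.Projective.exists_sum_smul_eq_self {R M : Type*} [Semiring R] [AddCommMonoid M]
    [Module R M] [Module.Finite R M] [Module.Projective R M] :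
    ∃ (n : ℕ) (v : Fin n → M) (c : Fin n → M →ₗ[R] R), ∀ m, ∑ i, c i m • v i = m := by
  obtain ⟨n, f, g, -, -, hfg⟩ := Module.Finite.exists_comp_eq_id_of_projective R M
  refine ⟨n, fun i => f (Pi.single i 1), fun i => LinearMap.proj i ∘ₗ g, fun m => ?_⟩
  calc ∑ i, g m i • f (Pi.single i 1) = f (∑ i, g m i • Pi.single i 1) := by simp [map_sum]
    _ = f (g m) := by congr 1; ext j; simp [Finset.sum_apply, Pi.single_apply]
    _ = m := LinearMap.congr_fun hfg m

section

variable {K R M N : Type*} [CommSemiring K] [Semiring R] [AddCommMonoid M] [Module R M]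
  [AddCommMonoid N] [Module R N] [Module K N] [SMulCommClass R K N]

def LinearMap.smulRightₗ' (f : M →ₗ[R] R) : N →ₗ[K] M →ₗ[R] N where
  toFun := f.smulRight
  map_add' x y := by ext; simp [smul_add]
  map_smul' k x := by ext; simp [smul_comm]

variable (K) in
theorem Module.Projective.exists_sum_comp_applyₗ'_eq_id [Module.Finite R M]
    [Module.Projective R M] :
    ∃ (n : ℕ) (v : Fin n → M) (h : Fin n → N →ₗ[K] M →ₗ[R] N),
      ∑ i, h i ∘ₗ LinearMap.applyₗ' K (v i) = LinearMap.id := by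
  obtain ⟨n, v, c, hvc⟩ := Module.Projective.exists_sum_smul_eq_self (R := R) (M := M)
  refine ⟨n, v, fun i => (c i).smulRightₗ', ?_⟩
  ext φ m
  simpa [LinearMap.smulRightₗ'] using congrArg φ (hvc m)

variable (X : Type*) [AddCommMonoid X] [Module K X]

theorem TensorProduct.eq_zero_of_forall_lTensor_applyₗ'_eq_zero [Module.Finite R M]
    [Module.Projective R M] (t : X ⊗[K] (M →ₗ[R] N))
    (ht : ∀ m, (LinearMap.applyₗ' K m).lTensor X t = 0) : t = 0 := by
  obtain ⟨n, v, h, hid⟩ :=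
    Module.Projective.exists_sum_comp_applyₗ'_eq_id K (R := R) (M := M) (N := N)
  calc t = (∑ i, h i ∘ₗ LinearMap.applyₗ' K (v i)).lTensor X t := by simp [hid]
    _ = 0 := by
      rw [← LinearMap.coe_lTensorHom, map_sum, LinearMap.sum_apply]
      refine Finset.sum_eq_zero fun i _ => ?_
      rw [LinearMap.coe_lTensorHom, LinearMap.lTensor_comp, LinearMap.comp_apply, ht, map_zero]

theorem TensorProduct.tmul_eq_zero_iff_forall_tmul_apply_eq_zero [Module.Finite R M]
    [Module.Projective R M] (x : X) (φ : M →ₗ[R] N) :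
    x ⊗ₜ[K] φ = 0 ↔ ∀ m, x ⊗ₜ[K] φ m = 0 := by
  refine ⟨fun h m => by simpa using congrArg ((LinearMap.applyₗ' K m).lTensor X) h, fun h => ?_⟩
  exact eq_zero_of_forall_lTensor_applyₗ'_eq_zero X _ fun m => by simpa using h m

end

theorem injective_lTensor_toSpanSingleton_iff {K X E : Type*} [CommRing K] [AddCommGroup X]
    [Module K X] [AddCommGroup E] [Module K E] (e : E) :
    Function.Injective ((LinearMap.toSpanSingleton K E e).lTensor X) ↔
      ∀ x : X, x ⊗ₜ[K] e = 0 → x = 0 := by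
  have : (LinearMap.toSpanSingleton K E e).lTensor X =
      (TensorProduct.mk K X E).flip e ∘ₗ TensorProduct.rid K X := by
    ext; simp
  rw [this, LinearMap.coe_comp, LinearEquiv.coe_coe, EquivLike.injective_comp,
    injective_iff_map_eq_zero]
  simp

theorem TensorProduct.injective_mk_iff {K X M : Type*} [CommRing K] [AddCommGroup X]
    [Module K X] [AddCommGroup M] [Module K M] :
    Function.Injective (fun x : X => (fun m : M => x ⊗ₜ[K] m)) ↔
      ∀ x : X, (∀ m : M, x ⊗ₜ[K] m = 0) → x = 0 := by
  change Function.Injective (DFunLike.coe ∘ TensorProduct.mk K X M) ↔ _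
  rw [DFunLike.coe_injective.of_comp_iff, injective_iff_map_eq_zero]
  simp [LinearMap.ext_iff]

theorem stmt18_general {K A : Type} [CommRing K] [Ring A]
    (M : Type) [AddCommGroup M] [Module K M] [Module Aᵐᵒᵖ M]
    [SMulCommClass Aᵐᵒᵖ K M]
    [Module.Finite Aᵐᵒᵖ M] [Module.Projective Aᵐᵒᵖ M] :
    (∀ (X : Type) (_ : AddCommGroup X) (_ : Module K X),
      Function.Injective
        (LinearMap.lTensor X
          (LinearMap.toSpanSingleton K (Module.End Aᵐᵒᵖ M) LinearMap.id))) ↔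
    (∀ (X : Type) (_ : AddCommGroup X) (_ : Module K X),
      Function.Injective (fun x : X => (fun m : M => (x ⊗ₜ[K] m : X ⊗[K] M)))) := by
  refine forall_congr' fun X => forall_congr' fun _ => forall_congr' fun _ => ?_
  simp only [injective_lTensor_toSpanSingleton_iff, TensorProduct.injective_mk_iff,
    TensorProduct.tmul_eq_zero_iff_forall_tmul_apply_eq_zero, LinearMap.id_apply]

/-- Let `K` be a commutative ring, `A` a `K`-algebra, `M` a right
`A`-module that is finitely generated and projective, `E = End_A(M)`, and
`i_M : K → E` the canonical map `k ↦ (m ↦ k • m)`.  Then `i_M` is a pure morphism of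
`K`-modules (i.e. `X ⊗[K] i_M` is injective for every `K`-module `X`) if and only if
`M` is totally faithful over `K` (i.e. `X → Hom_A(M, X ⊗[K] M)`, `x ↦ (m ↦ x ⊗ m)`, is
injective for every `K`-module `X`).  (Right `A`-modules are encoded as modules over
the opposite ring.) -/
theorem stmt18 {K A : Type} [CommRing K] [Ring A] [Algebra K A]
    (M : Type) [AddCommGroup M] [Module K M] [Module Aᵐᵒᵖ M]
    [SMulCommClass K Aᵐᵒᵖ M] [SMulCommClass Aᵐᵒᵖ K M]
    [Module.Finite Aᵐᵒᵖ M] [Module.Projective Aᵐᵒᵖ M] :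
    (∀ (X : Type) (_ : AddCommGroup X) (_ : Module K X),
      Function.Injective
        (LinearMap.lTensor X
          (LinearMap.toSpanSingleton K (Module.End Aᵐᵒᵖ M) LinearMap.id))) ↔
    (∀ (X : Type) (_ : AddCommGroup X) (_ : Module K X),
      Function.Injective (fun x : X => (fun m : M => (x ⊗ₜ[K] m : X ⊗[K] M)))) :=
  stmt18_general M
end
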